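/- Assume in addition that g is three times continuously differentiable and that the level set {u ∈ ℝⁿ : Θ(u) ≤ Θ(u⁽⁰⁾)} is compact. Let (u⁽ʲ⁾) be generated by the modified B-semismooth Newton iteration with Θ(u⁽ʲ⁾) > 0 for all j, and suppose (u⁽ʲ⁾) converges to a limit point u* with I⁺(u*) ∪ I⁻(u*) = ∅. Then there exists an index j₀ ∈ ℕ such that for all j ≥ j₀ the full Newton step is accepted, i.e., Θ(u⁽ʲ⁾ + d⁽ʲ⁾) ≤ (1 − 2σ)·Θ(u⁽ʲ⁾), and hence t_j = 1 for all j ≥ j₀. -/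

import Mathlib

open scoped RealInnerProductSpace
open Filter Topology

noncomputable section

abbrev Euc (n : ℕ) := EuclideanSpace ℝ (Fin n)

variable {n : ℕ}

/-- Componentwise soft-thresholding operator `(S_{γw}(v))_k = sgn(v_k)·max(|v_k| − γw_k, 0)`. -/
def soft (γ : ℝ) (w : Fin n → ℝ) (v : Euc n) : Euc n :=
  WithLp.toLp 2 (fun k => Real.sign (v k) * max (|v k| - γ * w k) 0)

/-- The map `F(u) = u − S_{γw}(u − γ∇g(u))`. -/
def Fm (g : Euc n → ℝ) (γ : ℝ) (w : Fin n → ℝ) (u : Euc n) : Euc n :=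
  u - soft γ w (u - γ • gradient g u)

/-- The merit functional `Θ(u) = ‖F(u)‖₂²`. -/
def Th (g : Euc n → ℝ) (γ : ℝ) (w : Fin n → ℝ) (u : Euc n) : ℝ :=
  ‖Fm g γ w u‖ ^ 2

/-- The Hessian of `g` at `u`, applied to `d`: `∇²g(u)d`. -/
def hess (g : Euc n → ℝ) (u d : Euc n) : Euc n :=
  fderiv ℝ (gradient g) u d

/-- Standing assumptions on `g`: twice continuously differentiable, Lipschitz continuous
second derivative, and uniform bounds `c₁‖h‖² ≤ ⟨∇²g(u)h, h⟩ ≤ c₂‖h‖²`. -/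
structure Assump (n : ℕ) (g : Euc n → ℝ) (c₁ c₂ : ℝ) : Prop where
  contDiff : ContDiff ℝ 2 g
  lipHess : ∃ L : NNReal, LipschitzWith L fun u => fderiv ℝ (gradient g) u
  c1_pos : 0 < c₁
  c1_le_c2 : c₁ ≤ c₂
  lower : ∀ u h : Euc n, c₁ * ‖h‖ ^ 2 ≤ ⟪hess g u h, h⟫
  upper : ∀ u h : Euc n, ⟪hess g u h, h⟫ ≤ c₂ * ‖h‖ ^ 2

/-- `A⁺(u)`. -/
def Ap (g : Euc n → ℝ) (γ : ℝ) (w : Fin n → ℝ) (u : Euc n) : Set (Fin n) :=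
  {k | γ * gradient g u k + γ * w k < u k}

/-- `A⁻(u)`. -/
def Am (g : Euc n → ℝ) (γ : ℝ) (w : Fin n → ℝ) (u : Euc n) : Set (Fin n) :=
  {k | u k < γ * gradient g u k - γ * w k}

/-- `A(u) = A⁺(u) ∪ A⁻(u)`. -/
def Aset (g : Euc n → ℝ) (γ : ℝ) (w : Fin n → ℝ) (u : Euc n) : Set (Fin n) :=
  Ap g γ w u ∪ Am g γ w u

/-- `I°(u)`. -/
def Iz (g : Euc n → ℝ) (γ : ℝ) (w : Fin n → ℝ) (u : Euc n) : Set (Fin n) :=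
  {k | γ * gradient g u k - γ * w k < u k ∧ u k < γ * gradient g u k + γ * w k}

/-- `I⁺(u)`. -/
def Ipl (g : Euc n → ℝ) (γ : ℝ) (w : Fin n → ℝ) (u : Euc n) : Set (Fin n) :=
  {k | u k = γ * gradient g u k + γ * w k}

/-- `I⁻(u)`. -/
def Imi (g : Euc n → ℝ) (γ : ℝ) (w : Fin n → ℝ) (u : Euc n) : Set (Fin n) :=
  {k | u k = γ * gradient g u k - γ * w k}

/-- `A⁺₊(u)`. -/
def App (g : Euc n → ℝ) (γ : ℝ) (w : Fin n → ℝ) (u : Euc n) : Set (Fin n) :=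
  {k | γ * gradient g u k + γ * w k < u k ∧ u k < 0}

/-- `A⁻₋(u)`. -/
def Amm (g : Euc n → ℝ) (γ : ℝ) (w : Fin n → ℝ) (u : Euc n) : Set (Fin n) :=
  {k | 0 < u k ∧ u k < γ * gradient g u k - γ * w k}

/-- `I°₊(u)`. -/
def Izp (g : Euc n → ℝ) (γ : ℝ) (w : Fin n → ℝ) (u : Euc n) : Set (Fin n) :=
  {k | γ * gradient g u k - γ * w k < u k ∧ u k < γ * gradient g u k + γ * w k ∧
    γ * gradient g u k + γ * w k < 0}

/-- `I°₋(u)`. -/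
def Izm (g : Euc n → ℝ) (γ : ℝ) (w : Fin n → ℝ) (u : Euc n) : Set (Fin n) :=
  {k | 0 < γ * gradient g u k - γ * w k ∧ γ * gradient g u k - γ * w k < u k ∧
    u k < γ * gradient g u k + γ * w k}

/-- `Ā⁺(u) = A⁺(u) \ A⁺₊(u)`. -/
def ApBar (g : Euc n → ℝ) (γ : ℝ) (w : Fin n → ℝ) (u : Euc n) : Set (Fin n) :=
  Ap g γ w u \ App g γ w u

/-- `Ā⁻(u) = A⁻(u) \ A⁻₋(u)`. -/
def AmBar (g : Euc n → ℝ) (γ : ℝ) (w : Fin n → ℝ) (u : Euc n) : Set (Fin n) :=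
  Am g γ w u \ Amm g γ w u

/-- `Ā(u) = Ā⁺(u) ∪ Ā⁻(u)`. -/
def ABar (g : Euc n → ℝ) (γ : ℝ) (w : Fin n → ℝ) (u : Euc n) : Set (Fin n) :=
  ApBar g γ w u ∪ AmBar g γ w u

/-- `Ī°(u) = I°(u) \ (I°₊(u) ∪ I°₋(u))`. -/
def IzBar (g : Euc n → ℝ) (γ : ℝ) (w : Fin n → ℝ) (u : Euc n) : Set (Fin n) :=
  Iz g γ w u \ (Izp g γ w u ∪ Izm g γ w u)

/-- `Ī⁺(u) = I⁺(u) ∪ A⁺₊(u) ∪ I°₊(u)`. -/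
def IplBar (g : Euc n → ℝ) (γ : ℝ) (w : Fin n → ℝ) (u : Euc n) : Set (Fin n) :=
  Ipl g γ w u ∪ App g γ w u ∪ Izp g γ w u

/-- `Ī⁻(u) = I⁻(u) ∪ A⁻₋(u) ∪ I°₋(u)`. -/
def ImiBar (g : Euc n → ℝ) (γ : ℝ) (w : Fin n → ℝ) (u : Euc n) : Set (Fin n) :=
  Imi g γ w u ∪ Amm g γ w u ∪ Izm g γ w u

/-- `d` is a modified Newton direction at `u`. -/
def IsModDir (g : Euc n → ℝ) (γ : ℝ) (w : Fin n → ℝ) (u d : Euc n) : Prop :=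
  (∀ k ∈ ABar g γ w u, γ * hess g u d k = - Fm g γ w u k) ∧
  (∀ k ∈ IzBar g γ w u, d k = - u k) ∧
  (∀ k ∈ IplBar g γ w u, 0 ≤ d k + u k ∧ 0 ≤ γ * hess g u d k + Fm g γ w u k ∧
    (d k + u k) * (γ * hess g u d k + Fm g γ w u k) = 0) ∧
  (∀ k ∈ ImiBar g γ w u, d k + u k ≤ 0 ∧ γ * hess g u d k + Fm g γ w u k ≤ 0 ∧
    (d k + u k) * (γ * hess g u d k + Fm g γ w u k) = 0)

/-- `d` is a B-Newton direction at `u` (unmodified index sets). -/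
def IsBDir (g : Euc n → ℝ) (γ : ℝ) (w : Fin n → ℝ) (u d : Euc n) : Prop :=
  (∀ k ∈ Aset g γ w u, γ * hess g u d k = - Fm g γ w u k) ∧
  (∀ k ∈ Iz g γ w u, d k = - u k) ∧
  (∀ k ∈ Ipl g γ w u, 0 ≤ d k + u k ∧ 0 ≤ γ * hess g u d k + Fm g γ w u k ∧
    (d k + u k) * (γ * hess g u d k + Fm g γ w u k) = 0) ∧
  (∀ k ∈ Imi g γ w u, d k + u k ≤ 0 ∧ γ * hess g u d k + Fm g γ w u k ≤ 0 ∧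
    (d k + u k) * (γ * hess g u d k + Fm g γ w u k) = 0)

/-- `t = β^l` where `l` is the smallest nonnegative integer satisfying the Armijo inequality. -/
def ArmijoStepsize (g : Euc n → ℝ) (γ : ℝ) (w : Fin n → ℝ) (β σ : ℝ) (u d : Euc n)
    (t : ℝ) : Prop :=
  ∃ l : ℕ, t = β ^ l ∧
    Th g γ w (u + (β ^ l) • d) ≤ (1 - 2 * σ * β ^ l) * Th g γ w u ∧
    ∀ l' < l, ¬ (Th g γ w (u + (β ^ l') • d) ≤ (1 - 2 * σ * β ^ l') * Th g γ w u)

/-- The modified B-semismooth Newton iteration with Armijo damping. -/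
def ModIter (g : Euc n → ℝ) (γ : ℝ) (w : Fin n → ℝ) (β σ : ℝ)
    (useq dseq : ℕ → Euc n) (tseq : ℕ → ℝ) : Prop :=
  (∀ j, IsModDir g γ w (useq j) (dseq j)) ∧
  (∀ j, ArmijoStepsize g γ w β σ (useq j) (dseq j) (tseq j)) ∧
  (∀ j, useq (j + 1) = useq j + tseq j • dseq j)

/-- The B-semismooth Newton iteration (unmodified index sets) with Armijo damping. -/
def BIter (g : Euc n → ℝ) (γ : ℝ) (w : Fin n → ℝ) (β σ : ℝ)
    (useq dseq : ℕ → Euc n) (tseq : ℕ → ℝ) : Prop :=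
  (∀ j, IsBDir g γ w (useq j) (dseq j)) ∧
  (∀ j, ArmijoStepsize g γ w β σ (useq j) (dseq j) (tseq j)) ∧
  (∀ j, useq (j + 1) = useq j + tseq j • dseq j)

/-!
Near `u*` the index sets `A⁺(u*)`, `A⁻(u*)`, `I°(u*)` persist, since `I⁺(u*) ∪ I⁻(u*) = ∅` makes
all their defining inequalities strict. There every coordinate of `F` is an affine expression in
`u` and `γ∇g(u)`, so the Newton equations together with a Taylor expansion of `∇g` (Lipschitz
Hessian with constant `L`) give
`‖F(u + τd)‖ ≤ (1 - τ)‖F(u)‖ + γLτ²‖d‖²`, while strong convexity gives `‖d‖ ≤ κ‖F(u)‖`.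
The modification of the index sets only costs the restriction `τ ≤ 1/2`, and only through
`I°₊(u)` and `I°₋(u)`.

Hence all sufficiently small steps pass the Armijo test near `u*`. This forces `F(u*) = 0`:
otherwise `Θ(u⁽ʲ⁾) ↓ Θ(u*) > 0` makes `t_j → 0`, and the rejected step `t_j / β` would have
passed. At a zero of `F` with `I⁺(u*) ∪ I⁻(u*) = ∅` the sets `I°₊`, `I°₋` are empty near `u*`, so
the estimate holds for `τ = 1` and reads `‖F(u + d)‖ ≤ γLκ²‖F(u)‖²`; the full step therefore
passes once `Θ(u⁽ʲ⁾)` is small.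
-/

section

variable {ι : Type*} [Fintype ι]

theorem EuclideanSpace.norm_le_norm_of_abs_apply_le {x y : EuclideanSpace ℝ ι}
    (h : ∀ k, |x k| ≤ y k) : ‖x‖ ≤ ‖y‖ := by
  rw [EuclideanSpace.norm_eq, EuclideanSpace.norm_eq]
  gcongr with k
  exact (h k).trans (le_abs_self _)

theorem EuclideanSpace.norm_le_of_abs_apply_le {x y z : EuclideanSpace ℝ ι} {a : ℝ} (ha : 0 ≤ a)
    (h : ∀ k, |x k| ≤ a * |y k| + |z k|) : ‖x‖ ≤ a * ‖y‖ + ‖z‖ := by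
  let abs (v : EuclideanSpace ℝ ι) : EuclideanSpace ℝ ι := WithLp.toLp 2 fun k => |v k|
  have norm_abs (v : EuclideanSpace ℝ ι) : ‖abs v‖ = ‖v‖ := by simp [abs, EuclideanSpace.norm_eq]
  calc ‖x‖ ≤ ‖a • abs y + abs z‖ :=
        EuclideanSpace.norm_le_norm_of_abs_apply_le fun k => by simpa [abs] using h k
    _ ≤ a * ‖y‖ + ‖z‖ := by
        grw [norm_add_le, norm_smul, Real.norm_of_nonneg ha, norm_abs, norm_abs]

end

theorem ContDiff.gradient {F : Type*} [NormedAddCommGroup F] [InnerProductSpace ℝ F]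
    [CompleteSpace F] {f : F → ℝ} {k m : WithTop ℕ∞} (hf : ContDiff ℝ k f) (hmk : m + 1 ≤ k) :
    ContDiff ℝ m (gradient f) :=
  (InnerProductSpace.toDual ℝ F).symm.contDiff.comp (hf.fderiv_right hmk)

theorem norm_sub_sub_fderiv_le_of_lipschitzWith {E F : Type*} [NormedAddCommGroup E]
    [NormedSpace ℝ E] [NormedAddCommGroup F] [NormedSpace ℝ F] {f : E → F} {L : NNReal}
    (hf : Differentiable ℝ f) (hL : LipschitzWith L (fderiv ℝ f)) (x y : E) :
    ‖f y - f x - fderiv ℝ f x (y - x)‖ ≤ L * ‖y - x‖ ^ 2 := by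
  have hbound (z : E) (hz : z ∈ Metric.closedBall x ‖y - x‖) :
      ‖fderiv ℝ f z - fderiv ℝ f x‖ ≤ L * ‖y - x‖ := by
    rw [← dist_eq_norm]
    exact (hL.dist_le_mul z x).trans (by gcongr; exact Metric.mem_closedBall.1 hz)
  have key := (convex_closedBall x ‖y - x‖).norm_image_sub_le_of_norm_fderiv_le'
    (fun z _ => hf z) hbound (Metric.mem_closedBall_self (norm_nonneg _))
    (y := y) (by simp [dist_eq_norm])
  rwa [mul_assoc, ← sq] at key

theorem dist_add_smul_le {E : Type*} [NormedAddCommGroup E] [NormedSpace ℝ E] {u d v : E}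
    {τ : ℝ} (hτ : 0 ≤ τ) : dist (u + τ • d) v ≤ dist u v + τ * ‖d‖ := by
  grw [dist_triangle _ u, dist_self_add_left, norm_smul, Real.norm_of_nonneg hτ, add_comm]

theorem abs_add_mul_neg_add_le {τ : ℝ} (hτ : τ ≤ 1) (a r : ℝ) :
    |a + τ * -a + r| ≤ (1 - τ) * |a| + |r| :=
  calc |a + τ * -a + r| = |(1 - τ) * a + r| := by ring_nf
    _ ≤ |(1 - τ) * a| + |r| := abs_add_le _ _
    _ = (1 - τ) * |a| + |r| := by rw [abs_mul, abs_of_nonneg (by linarith)]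

theorem sq_one_sub_add_mul_sq_le {σ τ A : ℝ} (hσ : σ ≤ 1 / 2) (hτ₀ : 0 ≤ τ) (hτ₁ : τ ≤ 1)
    (hA : 0 ≤ A) (h : τ * (1 + A) ^ 2 ≤ 1) : (1 - τ + A * τ ^ 2) ^ 2 ≤ 1 - 2 * σ * τ := by
  have hτ3 : τ ^ 3 ≤ τ := pow_le_of_le_one hτ₀ hτ₁ (by norm_num)
  nlinarith [mul_nonneg hA hτ₀, mul_le_mul_of_nonneg_left h hτ₀,
    mul_le_mul_of_nonneg_left hτ3 (mul_nonneg hA hA), mul_nonneg (mul_nonneg hA hτ₀) hτ₀]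

theorem pos_or_pos_and_neg_or_neg_of_max_min_eq_zero {u a b : ℝ} (hab : b < a) (ha : u ≠ a)
    (hb : u ≠ b) (h : max b (min u a) = 0) : (0 < u ∨ 0 < a) ∧ (u < 0 ∨ b < 0) := by
  rcases ha.lt_or_gt with ha | ha
  · rcases hb.lt_or_gt with hb | hb
    · rw [min_eq_left ha.le, max_eq_left hb.le] at h
      exact ⟨Or.inr (by linarith), Or.inl (by linarith)⟩
    · rw [min_eq_left ha.le, max_eq_right hb.le] at h
      exact ⟨Or.inr (by linarith), Or.inr (by linarith)⟩
  · rw [min_eq_right ha.le, max_eq_right hab.le] at h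
    exact ⟨Or.inl (by linarith), Or.inr (by linarith)⟩

theorem tendsto_zero_of_le_one_sub_mul {θ t : ℕ → ℝ} {θ' c : ℝ} (hc : 0 < c) (hθ' : 0 < θ')
    (hθ : Tendsto θ atTop (𝓝 θ')) (hθ₀ : ∀ j, 0 ≤ θ j) (ht : ∀ j, 0 ≤ t j)
    (hdec : ∀ j, θ (j + 1) ≤ (1 - c * t j) * θ j) : Tendsto t atTop (𝓝 0) := by
  have hanti : Antitone θ := antitone_nat_of_succ_le fun j =>
    (hdec j).trans (by nlinarith [mul_nonneg (mul_nonneg hc.le (ht j)) (hθ₀ j)])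
  have hub (j : ℕ) : t j ≤ (θ j - θ (j + 1)) / (c * θ') := by
    have hlow : θ' ≤ θ j := hanti.le_of_tendsto hθ j
    rw [le_div_iff₀ (by positivity)]
    nlinarith [hdec j, mul_le_mul_of_nonneg_left hlow (mul_nonneg hc.le (ht j))]
  have hlim : Tendsto (fun j => (θ j - θ (j + 1)) / (c * θ')) atTop (𝓝 0) := by
    simpa using (hθ.sub (hθ.comp (tendsto_add_atTop_nat 1))).div_const (c * θ')
  exact tendsto_of_tendsto_of_tendsto_of_le_of_le tendsto_const_nhds hlim ht hub

variable {g : Euc n → ℝ} {γ : ℝ} {w : Fin n → ℝ} {u d : Euc n} {k : Fin n}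

theorem Assump.contDiff_gradient {c₁ c₂ : ℝ} (hg : Assump n g c₁ c₂) :
    ContDiff ℝ 1 (gradient g) :=
  hg.contDiff.gradient (by norm_num)

theorem soft_apply (hc : 0 ≤ γ * w k) (v : Euc n) :
    soft γ w v k = v k - max (-(γ * w k)) (min (v k) (γ * w k)) := by
  simp only [soft, PiLp.toLp_apply]
  rcases lt_trichotomy (v k) 0 with h | h | h
  · rw [Real.sign_of_neg h, abs_of_neg h]
    simp only [max_def, min_def]; split_ifs <;> linarith
  · simp [h, hc]
  · rw [Real.sign_of_pos h, abs_of_pos h]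
    simp only [max_def, min_def]; split_ifs <;> linarith

theorem Fm_apply (hc : 0 ≤ γ * w k) (u : Euc n) :
    Fm g γ w u k =
      max (γ * gradient g u k - γ * w k) (min (u k) (γ * gradient g u k + γ * w k)) := by
  simp only [Fm, PiLp.sub_apply, soft_apply hc, PiLp.smul_apply, smul_eq_mul]
  simp only [max_def, min_def]; split_ifs <;> linarith

theorem Fm_apply_of_mem_Ap (hc : 0 ≤ γ * w k) (hk : k ∈ Ap g γ w u) :
    Fm g γ w u k = γ * gradient g u k + γ * w k := by
  have hk : γ * gradient g u k + γ * w k < u k := hk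
  rw [Fm_apply hc, min_eq_right hk.le, max_eq_right (by linarith)]

theorem Fm_apply_of_mem_Am (hc : 0 ≤ γ * w k) (hk : k ∈ Am g γ w u) :
    Fm g γ w u k = γ * gradient g u k - γ * w k := by
  have hk : u k < γ * gradient g u k - γ * w k := hk
  rw [Fm_apply hc, min_eq_left (by linarith), max_eq_left hk.le]

theorem Fm_apply_of_le_of_le (h₁ : γ * gradient g u k - γ * w k ≤ u k)
    (h₂ : u k ≤ γ * gradient g u k + γ * w k) : Fm g γ w u k = u k := by
  rw [Fm_apply (by linarith), min_eq_left h₂, max_eq_right h₁]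

theorem Fm_apply_of_mem_Iz (hk : k ∈ Iz g γ w u) : Fm g γ w u k = u k :=
  Fm_apply_of_le_of_le hk.1.le hk.2.le

theorem continuous_Fm (hg : Continuous (gradient g)) (hc : ∀ k, 0 ≤ γ * w k) :
    Continuous (Fm g γ w) := by
  have : Fm g γ w = fun u => WithLp.toLp 2 fun k =>
      max (γ * gradient g u k - γ * w k) (min (u k) (γ * gradient g u k + γ * w k)) := by
    ext u k
    exact Fm_apply (hc k) u
  rw [this]
  exact (PiLp.continuous_toLp 2 _).comp (continuous_pi fun k => by fun_prop)

theorem Th_le_mul_of_norm_Fm_le {x : Euc n} {q m : ℝ}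
    (hx : ‖Fm g γ w x‖ ≤ q * ‖Fm g γ w u‖) (hqm : q ^ 2 ≤ m) :
    Th g γ w x ≤ m * Th g γ w u := by
  unfold Th
  calc ‖Fm g γ w x‖ ^ 2 ≤ (q * ‖Fm g γ w u‖) ^ 2 := by gcongr
    _ = q ^ 2 * ‖Fm g γ w u‖ ^ 2 := by ring
    _ ≤ m * ‖Fm g γ w u‖ ^ 2 := by gcongr

theorem mem_Ap_or_Am_or_Iz_or_Ipl_or_Imi (u : Euc n) (k : Fin n) :
    k ∈ Ap g γ w u ∨ k ∈ Am g γ w u ∨ k ∈ Iz g γ w u ∨ k ∈ Ipl g γ w u ∨ k ∈ Imi g γ w u := by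
  rcases lt_trichotomy (u k) (γ * gradient g u k + γ * w k) with h | h | h
  · rcases lt_trichotomy (u k) (γ * gradient g u k - γ * w k) with h' | h' | h'
    exacts [Or.inr (Or.inl h'), Or.inr (Or.inr (Or.inr (Or.inr h'))),
      Or.inr (Or.inr (Or.inl ⟨h', h⟩))]
  · exact Or.inr (Or.inr (Or.inr (Or.inl h)))
  · exact Or.inl h

theorem IsModDir.of_mem_Ap (hd : IsModDir g γ w u d) (hk : k ∈ Ap g γ w u) :
    γ * hess g u d k = -Fm g γ w u k ∨
      (u k < 0 ∧ d k = -u k ∧ 0 ≤ γ * hess g u d k + Fm g γ w u k) := by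
  by_cases hp : k ∈ App g γ w u
  · obtain ⟨h₁, h₂, h₃⟩ := hd.2.2.1 k (Or.inl (Or.inr hp))
    rcases mul_eq_zero.1 h₃ with h | h
    · exact Or.inr ⟨hp.2, by linarith, h₂⟩
    · exact Or.inl (by linarith)
  · exact Or.inl (hd.1 k (Or.inl ⟨hk, hp⟩))

theorem IsModDir.of_mem_Am (hd : IsModDir g γ w u d) (hk : k ∈ Am g γ w u) :
    γ * hess g u d k = -Fm g γ w u k ∨
      (0 < u k ∧ d k = -u k ∧ γ * hess g u d k + Fm g γ w u k ≤ 0) := by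
  by_cases hm : k ∈ Amm g γ w u
  · obtain ⟨h₁, h₂, h₃⟩ := hd.2.2.2 k (Or.inl (Or.inr hm))
    rcases mul_eq_zero.1 h₃ with h | h
    · exact Or.inr ⟨hm.1, by linarith, h₂⟩
    · exact Or.inl (by linarith)
  · exact Or.inl (hd.1 k (Or.inr ⟨hk, hm⟩))

theorem IsModDir.of_mem_Iz (hd : IsModDir g γ w u d) (hk : k ∈ Iz g γ w u) :
    d k = -u k ∨ (k ∈ Izp g γ w u ∧ γ * hess g u d k = -u k ∧ 0 ≤ d k + u k) ∨
      (k ∈ Izm g γ w u ∧ γ * hess g u d k = -u k ∧ d k + u k ≤ 0) := by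
  have hF := Fm_apply_of_mem_Iz hk
  by_cases hp : k ∈ Izp g γ w u
  · obtain ⟨h₁, h₂, h₃⟩ := hd.2.2.1 k (Or.inr hp)
    rcases mul_eq_zero.1 h₃ with h | h
    · exact Or.inl (by linarith)
    · exact Or.inr (Or.inl ⟨hp, by linarith, h₁⟩)
  by_cases hm : k ∈ Izm g γ w u
  · obtain ⟨h₁, h₂, h₃⟩ := hd.2.2.2 k (Or.inr hm)
    rcases mul_eq_zero.1 h₃ with h | h
    · exact Or.inl (by linarith)
    · exact Or.inr (Or.inr ⟨hm, by linarith, h₁⟩)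
  exact Or.inl (hd.2.1 k ⟨hk, by rintro (h | h) <;> contradiction⟩)

theorem IsModDir.hess_eq_or_abs_le (hd : IsModDir g γ w u d) (hc : ∀ k, 0 ≤ γ * w k)
    (k : Fin n) :
    γ * hess g u d k = -Fm g γ w u k ∨ (d k = -u k ∧ |u k| ≤ |Fm g γ w u k|) := by
  have complementary (h : (d k + u k) * (γ * hess g u d k + Fm g γ w u k) = 0) :=
    (mul_eq_zero.1 h).symm.imp eq_neg_of_add_eq_zero_left eq_neg_of_add_eq_zero_left
  rcases mem_Ap_or_Am_or_Iz_or_Ipl_or_Imi u k with hk | hk | hk | hk | hk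
  · refine (hd.of_mem_Ap hk).imp_right fun ⟨hneg, hdk, _⟩ => ⟨hdk, ?_⟩
    have : γ * gradient g u k + γ * w k < u k := hk
    rw [Fm_apply_of_mem_Ap (hc k) hk, abs_of_neg hneg, abs_of_neg (by linarith)]
    linarith
  · refine (hd.of_mem_Am hk).imp_right fun ⟨hpos, hdk, _⟩ => ⟨hdk, ?_⟩
    have : u k < γ * gradient g u k - γ * w k := hk
    rw [Fm_apply_of_mem_Am (hc k) hk, abs_of_pos hpos, abs_of_pos (by linarith)]
    linarith
  · rw [Fm_apply_of_mem_Iz hk]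
    rcases hd.of_mem_Iz hk with h | ⟨-, h, -⟩ | ⟨-, h, -⟩
    exacts [Or.inr ⟨h, le_rfl⟩, Or.inl h, Or.inl h]
  · have hF : Fm g γ w u k = u k := Fm_apply_of_le_of_le (by linarith [hc k, hk.symm.le]) hk.le
    rcases complementary (hd.2.2.1 k (Or.inl (Or.inl hk))).2.2 with h | h
    exacts [Or.inl h, Or.inr ⟨h, hF ▸ le_rfl⟩]
  · have hF : Fm g γ w u k = u k := Fm_apply_of_le_of_le hk.ge (by linarith [hc k, hk.le])
    rcases complementary (hd.2.2.2 k (Or.inl (Or.inl hk))).2.2 with h | h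
    exacts [Or.inl h, Or.inr ⟨h, hF ▸ le_rfl⟩]

theorem IsModDir.mul_inner_hess_le (hd : IsModDir g γ w u d) (hγ : 0 ≤ γ)
    (hc : ∀ k, 0 ≤ γ * w k) :
    γ * ⟪hess g u d, d⟫ ≤ n * ((‖d‖ + γ * ‖hess g u d‖) * ‖Fm g γ w u‖) := by
  have hterm (k : Fin n) :
      γ * (hess g u d k * d k) ≤ (‖d‖ + γ * ‖hess g u d‖) * ‖Fm g γ w u‖ := by
    have hdk := PiLp.norm_apply_le d k
    have hHk := PiLp.norm_apply_le (hess g u d) k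
    have hFk := PiLp.norm_apply_le (Fm g γ w u) k
    simp only [Real.norm_eq_abs] at hdk hHk hFk
    have hH0 : 0 ≤ γ * ‖hess g u d‖ := by positivity
    rcases hd.hess_eq_or_abs_le hc k with h | ⟨h, hu⟩
    · calc γ * (hess g u d k * d k) = -(Fm g γ w u k * d k) := by rw [← mul_assoc, h, neg_mul]
        _ ≤ |Fm g γ w u k| * |d k| := by rw [← abs_mul]; exact neg_le_abs _
        _ ≤ ‖Fm g γ w u‖ * ‖d‖ := by gcongr
        _ ≤ _ := by nlinarith [norm_nonneg (Fm g γ w u)]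
    · calc γ * (hess g u d k * d k) = -(γ * hess g u d k * u k) := by rw [h]; ring
        _ ≤ γ * |hess g u d k| * |u k| := by
          rw [← abs_of_nonneg hγ, ← abs_mul, ← abs_mul, abs_of_nonneg hγ]; exact neg_le_abs _
        _ ≤ γ * ‖hess g u d‖ * ‖Fm g γ w u‖ := by gcongr; exact hu.trans hFk
        _ ≤ _ := by nlinarith [norm_nonneg (Fm g γ w u), norm_nonneg d]
  calc γ * ⟪hess g u d, d⟫ = ∑ k, γ * (hess g u d k * d k) := by
        simp [PiLp.inner_apply, Finset.mul_sum, mul_comm]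
    _ ≤ ∑ _k : Fin n, (‖d‖ + γ * ‖hess g u d‖) * ‖Fm g γ w u‖ :=
        Finset.sum_le_sum fun k _ => hterm k
    _ = _ := by simp

theorem IsModDir.norm_le (hd : IsModDir g γ w u d) (hγ : 0 < γ) (hc : ∀ k, 0 ≤ γ * w k)
    {c₁ M : ℝ} (hc₁ : 0 < c₁) (hM : 0 ≤ M) (hlow : c₁ * ‖d‖ ^ 2 ≤ ⟪hess g u d, d⟫)
    (hH : ‖hess g u d‖ ≤ M * ‖d‖) :
    ‖d‖ ≤ n * (1 + γ * M) / (γ * c₁) * ‖Fm g γ w u‖ := by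
  have key : γ * c₁ * ‖d‖ * ‖d‖ ≤ n * (1 + γ * M) * ‖Fm g γ w u‖ * ‖d‖ := by
    calc γ * c₁ * ‖d‖ * ‖d‖ = γ * (c₁ * ‖d‖ ^ 2) := by ring
      _ ≤ γ * ⟪hess g u d, d⟫ := by gcongr
      _ ≤ n * ((‖d‖ + γ * ‖hess g u d‖) * ‖Fm g γ w u‖) := hd.mul_inner_hess_le hγ.le hc
      _ ≤ n * ((‖d‖ + γ * (M * ‖d‖)) * ‖Fm g γ w u‖) := by gcongr
      _ = n * (1 + γ * M) * ‖Fm g γ w u‖ * ‖d‖ := by ring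
  rcases (norm_nonneg d).eq_or_lt with h0 | hpos
  · rw [← h0]; positivity
  · rw [div_mul_eq_mul_div, le_div_iff₀ (by positivity)]
    nlinarith [le_of_mul_le_mul_right key hpos]

theorem exists_norm_le_mul_norm_Fm {c₁ c₂ : ℝ} (hg : Assump n g c₁ c₂) (hγ : 0 < γ)
    (hc : ∀ k, 0 ≤ γ * w k) (ustar : Euc n) :
    ∃ κ, 0 ≤ κ ∧ ∀ u d, dist u ustar ≤ 1 → IsModDir g γ w u d → ‖d‖ ≤ κ * ‖Fm g γ w u‖ := by
  obtain ⟨L, hL⟩ := hg.lipHess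
  have hc₁ := hg.c1_pos
  set H := fderiv ℝ (gradient g)
  set M := ‖H ustar‖ + L
  refine ⟨n * (1 + γ * M) / (γ * c₁), by positivity, fun u d hu hd => ?_⟩
  have hHu : ‖H u‖ ≤ M :=
    calc ‖H u‖ ≤ ‖H ustar‖ + ‖H u - H ustar‖ := norm_le_norm_add_norm_sub' _ _
      _ ≤ ‖H ustar‖ + L * 1 := by grw [← dist_eq_norm, hL.dist_le_mul, hu]
      _ = M := by rw [mul_one]
  exact hd.norm_le hγ hc hc₁ (by positivity) (hg.lower u d) (((H u).le_opNorm d).trans (by gcongr))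

namespace ArmijoStepsize

variable {β σ t : ℝ}

theorem pos (h : ArmijoStepsize g γ w β σ u d t) (hβ : 0 < β) : 0 < t := by
  obtain ⟨l, rfl, -⟩ := h
  positivity

theorem Th_add_smul_le (h : ArmijoStepsize g γ w β σ u d t) :
    Th g γ w (u + t • d) ≤ (1 - 2 * σ * t) * Th g γ w u := by
  obtain ⟨l, rfl, h, -⟩ := h
  exact h

theorem eq_one_of_le (h : ArmijoStepsize g γ w β σ u d t)
    (hfull : Th g γ w (u + d) ≤ (1 - 2 * σ) * Th g γ w u) : t = 1 := by
  obtain ⟨l, rfl, -, hmin⟩ := h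
  rcases Nat.eq_zero_or_pos l with rfl | hl
  · exact pow_zero β
  · exact absurd (by simpa using hfull) (hmin 0 hl)

theorem not_le_of_ne_one (h : ArmijoStepsize g γ w β σ u d t) (hβ : β ≠ 0) (ht : t ≠ 1) :
    ¬ Th g γ w (u + (t / β) • d) ≤ (1 - 2 * σ * (t / β)) * Th g γ w u := by
  obtain ⟨l, rfl, -, hmin⟩ := h
  obtain ⟨m, rfl⟩ : ∃ m, l = m + 1 := Nat.exists_eq_succ_of_ne_zero (by rintro rfl; simp at ht)
  rw [pow_succ, mul_div_cancel_right₀ _ hβ]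
  exact hmin m m.lt_succ_self

end ArmijoStepsize

def IndexSetsPersist (g : Euc n → ℝ) (γ : ℝ) (w : Fin n → ℝ) (ustar x : Euc n) : Prop :=
  Ap g γ w ustar ⊆ Ap g γ w x ∧ Am g γ w ustar ⊆ Am g γ w x ∧ Iz g γ w ustar ⊆ Iz g γ w x

theorem eventually_indexSetsPersist (hg : Continuous (gradient g)) (ustar : Euc n) :
    ∀ᶠ x in 𝓝 ustar, IndexSetsPersist g γ w ustar x := by
  have hAp (k : Fin n) : IsOpen {x | k ∈ Ap g γ w x} :=
    show IsOpen {x : Euc n | γ * gradient g x k + γ * w k < x k} from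
      isOpen_lt (by fun_prop) (by fun_prop)
  have hAm (k : Fin n) : IsOpen {x | k ∈ Am g γ w x} :=
    show IsOpen {x : Euc n | x k < γ * gradient g x k - γ * w k} from
      isOpen_lt (by fun_prop) (by fun_prop)
  have hIz (k : Fin n) : IsOpen {x | k ∈ Iz g γ w x} :=
    show IsOpen ({x : Euc n | γ * gradient g x k - γ * w k < x k} ∩
        {x | x k < γ * gradient g x k + γ * w k}) from
      (isOpen_lt (by fun_prop) (by fun_prop)).inter (isOpen_lt (by fun_prop) (by fun_prop))
  have persist {P : Euc n → Fin n → Prop} (hP : ∀ k, IsOpen {x | P x k}) :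
      ∀ᶠ x in 𝓝 ustar, ∀ k, P ustar k → P x k :=
    eventually_all.2 fun k => eventually_imp_distrib_left.2 fun hk => (hP k).mem_nhds hk
  filter_upwards [persist hAp, persist hAm, persist hIz] with x h₁ h₂ h₃
  exact ⟨h₁, h₂, h₃⟩

section StepCoordinate

variable {τ r : ℝ}

theorem abs_Fm_add_smul_apply_le_of_mem_Ap (hc : 0 ≤ γ * w k) (hd : IsModDir g γ w u d)
    (hτ₀ : 0 ≤ τ) (hτ₁ : τ ≤ 1) (hu : k ∈ Ap g γ w u) (hx : k ∈ Ap g γ w (u + τ • d))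
    (hr : γ * gradient g (u + τ • d) k = γ * gradient g u k + τ * (γ * hess g u d k) + r) :
    |Fm g γ w (u + τ • d) k| ≤ (1 - τ) * |Fm g γ w u k| + |r| := by
  have hFx : Fm g γ w (u + τ • d) k = Fm g γ w u k + τ * (γ * hess g u d k) + r := by
    rw [Fm_apply_of_mem_Ap hc hx, hr, Fm_apply_of_mem_Ap hc hu]; ring
  rcases hd.of_mem_Ap hu with hH | ⟨hneg, hdk, hH⟩
  · rw [hFx, hH]
    exact abs_add_mul_neg_add_le hτ₁ _ _
  · have hu' : γ * gradient g u k + γ * w k < u k := hu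
    have hx' : γ * gradient g (u + τ • d) k + γ * w k < (u + τ • d) k := hx
    have hxk : (u + τ • d) k = (1 - τ) * u k := by simp [hdk]; ring
    have hFu : Fm g γ w u k < 0 := by rw [Fm_apply_of_mem_Ap hc hu]; linarith
    have hFx_neg : Fm g γ w (u + τ • d) k < 0 := by
      rw [Fm_apply_of_mem_Ap hc hx]; nlinarith
    rw [abs_of_neg hFx_neg, abs_of_neg hFu]
    nlinarith [neg_abs_le r, mul_nonneg hτ₀ hH]

theorem abs_Fm_add_smul_apply_le_of_mem_Am (hc : 0 ≤ γ * w k) (hd : IsModDir g γ w u d)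
    (hτ₀ : 0 ≤ τ) (hτ₁ : τ ≤ 1) (hu : k ∈ Am g γ w u) (hx : k ∈ Am g γ w (u + τ • d))
    (hr : γ * gradient g (u + τ • d) k = γ * gradient g u k + τ * (γ * hess g u d k) + r) :
    |Fm g γ w (u + τ • d) k| ≤ (1 - τ) * |Fm g γ w u k| + |r| := by
  have hFx : Fm g γ w (u + τ • d) k = Fm g γ w u k + τ * (γ * hess g u d k) + r := by
    rw [Fm_apply_of_mem_Am hc hx, hr, Fm_apply_of_mem_Am hc hu]; ring
  rcases hd.of_mem_Am hu with hH | ⟨hpos, hdk, hH⟩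
  · rw [hFx, hH]
    exact abs_add_mul_neg_add_le hτ₁ _ _
  · have hu' : u k < γ * gradient g u k - γ * w k := hu
    have hx' : (u + τ • d) k < γ * gradient g (u + τ • d) k - γ * w k := hx
    have hxk : (u + τ • d) k = (1 - τ) * u k := by simp [hdk]; ring
    have hFu : 0 < Fm g γ w u k := by rw [Fm_apply_of_mem_Am hc hu]; linarith
    have hFx_pos : 0 < Fm g γ w (u + τ • d) k := by
      rw [Fm_apply_of_mem_Am hc hx]; nlinarith
    rw [abs_of_pos hFx_pos, abs_of_pos hFu]
    nlinarith [le_abs_self r, mul_nonneg hτ₀ (neg_nonneg.2 hH)]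

theorem abs_Fm_add_smul_apply_le_of_mem_Iz (hd : IsModDir g γ w u d) (hτ₀ : 0 ≤ τ)
    (hτ₁ : τ ≤ 1) (hu : k ∈ Iz g γ w u) (hx : k ∈ Iz g γ w (u + τ • d))
    (hr : γ * gradient g (u + τ • d) k = γ * gradient g u k + τ * (γ * hess g u d k) + r)
    (hcase : τ ≤ 1 / 2 ∨ k ∉ Izp g γ w u ∧ k ∉ Izm g γ w u) :
    |Fm g γ w (u + τ • d) k| ≤ (1 - τ) * |Fm g γ w u k| + |r| := by
  obtain ⟨hx₁, hx₂⟩ := hx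
  have hxk : (u + τ • d) k = u k + τ * d k := by simp
  rw [Fm_apply_of_mem_Iz ⟨hx₁, hx₂⟩, Fm_apply_of_mem_Iz hu, hxk]
  rw [hxk] at hx₁ hx₂
  rcases hd.of_mem_Iz hu with hdk | ⟨hp, hH, hdu⟩ | ⟨hm, hH, hdu⟩
  · rw [hdk, show u k + τ * -u k = (1 - τ) * u k by ring, abs_mul, abs_of_nonneg (by linarith)]
    linarith [abs_nonneg r]
  · -- the step may overshoot zero, but by at most `τ |u k| ≤ (1 - τ) |u k|`
    have hτ : τ ≤ 1 / 2 := hcase.resolve_right fun h => h.1 hp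
    obtain ⟨-, hu₂, ha⟩ := hp
    rw [abs_of_neg (hu₂.trans ha)]
    refine abs_le.2 ⟨?_, ?_⟩
    · nlinarith [abs_nonneg r, mul_nonneg hτ₀ hdu]
    · nlinarith [le_abs_self r, mul_nonneg (by linarith : 0 ≤ 1 - 2 * τ)
        (by linarith : 0 ≤ -u k)]
  · have hτ : τ ≤ 1 / 2 := hcase.resolve_right fun h => h.2 hm
    obtain ⟨hb, hu₁, -⟩ := hm
    rw [abs_of_pos (hb.trans hu₁)]
    refine abs_le.2 ⟨?_, ?_⟩
    · nlinarith [neg_abs_le r, mul_nonneg (by linarith : 0 ≤ 1 - 2 * τ) (hb.trans hu₁).le]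
    · nlinarith [abs_nonneg r, mul_nonneg hτ₀ (neg_nonneg.2 hdu)]

end StepCoordinate

theorem norm_Fm_add_smul_le {ustar : Euc n} {τ : ℝ} {L : NNReal}
    (hgd : Differentiable ℝ (gradient g)) (hL : LipschitzWith L (fderiv ℝ (gradient g)))
    (hγ : 0 ≤ γ) (hc : ∀ k, 0 ≤ γ * w k) (hsmooth : Ipl g γ w ustar ∪ Imi g γ w ustar = ∅)
    (hd : IsModDir g γ w u d) (hτ₀ : 0 ≤ τ) (hτ₁ : τ ≤ 1)
    (hu : IndexSetsPersist g γ w ustar u) (hx : IndexSetsPersist g γ w ustar (u + τ • d))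
    (hcase : τ ≤ 1 / 2 ∨ ∀ k, k ∉ Izp g γ w u ∧ k ∉ Izm g γ w u) :
    ‖Fm g γ w (u + τ • d)‖ ≤ (1 - τ) * ‖Fm g γ w u‖ + γ * L * τ ^ 2 * ‖d‖ ^ 2 := by
  set r : Euc n := γ • (gradient g (u + τ • d) - gradient g u - hess g u (τ • d))
  have hr (k : Fin n) : γ * gradient g (u + τ • d) k =
      γ * gradient g u k + τ * (γ * hess g u d k) + r k := by
    simp only [r, hess, map_smul, PiLp.smul_apply, PiLp.sub_apply, smul_eq_mul]; ring
  have hcoord (k : Fin n) :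
      |Fm g γ w (u + τ • d) k| ≤ (1 - τ) * |Fm g γ w u k| + |r k| := by
    have hk := Set.eq_empty_iff_forall_notMem.1 hsmooth k
    rcases mem_Ap_or_Am_or_Iz_or_Ipl_or_Imi ustar k with h | h | h | h | h
    · exact abs_Fm_add_smul_apply_le_of_mem_Ap (hc k) hd hτ₀ hτ₁ (hu.1 h) (hx.1 h) (hr k)
    · exact abs_Fm_add_smul_apply_le_of_mem_Am (hc k) hd hτ₀ hτ₁ (hu.2.1 h) (hx.2.1 h) (hr k)
    · exact abs_Fm_add_smul_apply_le_of_mem_Iz hd hτ₀ hτ₁ (hu.2.2 h) (hx.2.2 h) (hr k)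
        (hcase.imp_right (· k))
    · exact (hk (Or.inl h)).elim
    · exact (hk (Or.inr h)).elim
  have htaylor := norm_sub_sub_fderiv_le_of_lipschitzWith hgd hL u (u + τ • d)
  rw [add_sub_cancel_left] at htaylor
  calc ‖Fm g γ w (u + τ • d)‖ ≤ (1 - τ) * ‖Fm g γ w u‖ + ‖r‖ :=
        EuclideanSpace.norm_le_of_abs_apply_le (by linarith) hcoord
    _ ≤ (1 - τ) * ‖Fm g γ w u‖ + γ * (L * ‖τ • d‖ ^ 2) := by
        rw [norm_smul, Real.norm_of_nonneg hγ]; gcongr; exact htaylor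
    _ = (1 - τ) * ‖Fm g γ w u‖ + γ * L * τ ^ 2 * ‖d‖ ^ 2 := by
        rw [norm_smul, Real.norm_of_nonneg hτ₀]; ring

section LocalAnalysis

variable {c₁ c₂ σ : ℝ} {ustar : Euc n}

theorem exists_forall_Th_add_smul_le (hg : Assump n g c₁ c₂) (hγ : 0 < γ)
    (hc : ∀ k, 0 ≤ γ * w k) (hσ : σ ≤ 1 / 2) (hsmooth : Ipl g γ w ustar ∪ Imi g γ w ustar = ∅) :
    ∃ δ > 0, ∃ τ₀ > 0, ∀ u d τ, dist u ustar < δ → IsModDir g γ w u d → 0 ≤ τ → τ ≤ τ₀ →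
      Th g γ w (u + τ • d) ≤ (1 - 2 * σ * τ) * Th g γ w u := by
  obtain ⟨L, hL⟩ := hg.lipHess
  have hgrad := hg.contDiff_gradient
  obtain ⟨κ, hκ, hdir⟩ := exists_norm_le_mul_norm_Fm hg hγ hc ustar
  obtain ⟨ε, hε, hstab⟩ := Metric.eventually_nhds_iff.1
    (eventually_indexSetsPersist (γ := γ) (w := w) hgrad.continuous ustar)
  set Φ := ‖Fm g γ w ustar‖ + 1
  obtain ⟨δ, hδ, hΦ⟩ := Metric.eventually_nhds_iff.1 <|
    (continuous_Fm hgrad.continuous hc).norm.continuousAt.eventually (gt_mem_nhds (lt_add_one _))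
  set A := γ * L * κ ^ 2 * Φ
  refine ⟨min (min (ε / 2) δ) 1, by positivity,
    min (min (1 / 2) (1 / (1 + A) ^ 2)) (ε / (2 * (κ * Φ + 1))), by positivity,
    fun u d τ hu hd hτ₀ hτ => ?_⟩
  simp only [lt_min_iff, le_min_iff] at hu hτ
  have hFu : ‖Fm g γ w u‖ ≤ Φ := (hΦ hu.1.2).le
  have hdu : ‖d‖ ≤ κ * ‖Fm g γ w u‖ := hdir u d hu.2.le hd
  have hτd : τ * ‖d‖ < ε / 2 :=
    calc τ * ‖d‖ ≤ ε / (2 * (κ * Φ + 1)) * (κ * Φ) := by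
          gcongr; exacts [hτ.2, hdu.trans (by gcongr)]
      _ < ε / 2 := by
          rw [div_mul_eq_mul_div, div_lt_div_iff₀ (by positivity) two_pos]; nlinarith
  have hx : dist (u + τ • d) ustar < ε := (dist_add_smul_le hτ₀).trans_lt (by linarith [hu.1.1])
  have hτ₁ : τ ≤ 1 := by linarith [hτ.1.1]
  have hτA : τ * (1 + A) ^ 2 ≤ 1 := by
    have := hτ.1.2
    rwa [le_div_iff₀ (by positivity)] at this
  have hstep := norm_Fm_add_smul_le (hgrad.differentiable one_ne_zero) hL hγ.le hc hsmooth hd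
    hτ₀ hτ₁ (hstab (hu.1.1.trans (half_lt_self hε))) (hstab hx) (Or.inl hτ.1.1)
  refine Th_le_mul_of_norm_Fm_le ?_ (sq_one_sub_add_mul_sq_le hσ hτ₀ hτ₁ (by positivity) hτA)
  have hd2 : ‖d‖ ^ 2 ≤ κ ^ 2 * Φ * ‖Fm g γ w u‖ :=
    calc ‖d‖ ^ 2 ≤ (κ * ‖Fm g γ w u‖) ^ 2 := by gcongr
      _ = κ ^ 2 * ‖Fm g γ w u‖ * ‖Fm g γ w u‖ := by ring
      _ ≤ κ ^ 2 * Φ * ‖Fm g γ w u‖ := by gcongr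
  calc ‖Fm g γ w (u + τ • d)‖ ≤ (1 - τ) * ‖Fm g γ w u‖ + γ * L * τ ^ 2 * ‖d‖ ^ 2 := hstep
    _ ≤ (1 - τ) * ‖Fm g γ w u‖ + γ * L * τ ^ 2 * (κ ^ 2 * Φ * ‖Fm g γ w u‖) := by gcongr
    _ = (1 - τ + A * τ ^ 2) * ‖Fm g γ w u‖ := by ring

theorem eventually_notMem_Izp_Izm (hg : Continuous (gradient g)) (hc : ∀ k, 0 < γ * w k)
    (hsmooth : Ipl g γ w ustar ∪ Imi g γ w ustar = ∅) (hF : Fm g γ w ustar = 0) :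
    ∀ᶠ x in 𝓝 ustar, ∀ k, k ∉ Izp g γ w x ∧ k ∉ Izm g γ w x := by
  refine eventually_all.2 fun k => ?_
  have hopen : IsOpen {x : Euc n | (0 < x k ∨ 0 < γ * gradient g x k + γ * w k) ∧
      (x k < 0 ∨ γ * gradient g x k - γ * w k < 0)} := by
    rw [Set.ofPred_and, Set.ofPred_or, Set.ofPred_or]
    exact ((isOpen_lt (by fun_prop) (by fun_prop)).union
      (isOpen_lt (by fun_prop) (by fun_prop))).inter
      ((isOpen_lt (by fun_prop) (by fun_prop)).union (isOpen_lt (by fun_prop) (by fun_prop)))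
  have hmem : ustar ∈ {x : Euc n | (0 < x k ∨ 0 < γ * gradient g x k + γ * w k) ∧
      (x k < 0 ∨ γ * gradient g x k - γ * w k < 0)} := by
    have hk := Set.eq_empty_iff_forall_notMem.1 hsmooth k
    have ha : ustar k ≠ γ * gradient g ustar k + γ * w k := fun h => hk (Or.inl h)
    have hb : ustar k ≠ γ * gradient g ustar k - γ * w k := fun h => hk (Or.inr h)
    have h0 : Fm g γ w ustar k = 0 := by rw [hF]; rfl
    rw [Fm_apply (hc k).le] at h0
    exact pos_or_pos_and_neg_or_neg_of_max_min_eq_zero (by linarith [hc k]) ha hb h0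
  filter_upwards [hopen.mem_nhds hmem] with x ⟨h₁, h₂⟩
  exact ⟨fun ⟨_, hu, ha⟩ => by rcases h₁ with h | h <;> linarith,
    fun ⟨hb, hu, _⟩ => by rcases h₂ with h | h <;> linarith⟩

theorem eventually_Th_add_le (hg : Assump n g c₁ c₂) (hγ : 0 < γ) (hc : ∀ k, 0 < γ * w k)
    (hσ : σ < 1 / 2) (hsmooth : Ipl g γ w ustar ∪ Imi g γ w ustar = ∅)
    (hF : Fm g γ w ustar = 0) :
    ∀ᶠ u in 𝓝 ustar, ∀ d, IsModDir g γ w u d →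
      Th g γ w (u + d) ≤ (1 - 2 * σ) * Th g γ w u := by
  obtain ⟨L, hL⟩ := hg.lipHess
  have hgrad := hg.contDiff_gradient
  have hc' (k : Fin n) : 0 ≤ γ * w k := (hc k).le
  obtain ⟨κ, hκ, hdir⟩ := exists_norm_le_mul_norm_Fm hg hγ hc' ustar
  obtain ⟨ε, hε, hstab⟩ := Metric.eventually_nhds_iff.1
    (eventually_indexSetsPersist (γ := γ) (w := w) hgrad.continuous ustar)
  set B := γ * L * κ ^ 2
  have hF0 : Tendsto (fun u => ‖Fm g γ w u‖) (𝓝 ustar) (𝓝 0) := by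
    simpa [hF] using (continuous_Fm hgrad.continuous hc').norm.tendsto ustar
  have hκF : Tendsto (fun u => κ * ‖Fm g γ w u‖) (𝓝 ustar) (𝓝 0) := by
    simpa using hF0.const_mul κ
  have hBF : Tendsto (fun u => (B * ‖Fm g γ w u‖) ^ 2) (𝓝 ustar) (𝓝 0) := by
    simpa using (hF0.const_mul B).pow 2
  filter_upwards [Metric.ball_mem_nhds ustar (half_pos hε),
    Metric.closedBall_mem_nhds ustar one_pos,
    eventually_notMem_Izp_Izm hgrad.continuous hc hsmooth hF,
    hκF.eventually (gt_mem_nhds (half_pos hε)),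
    hBF.eventually (eventually_le_nhds (by linarith : (0 : ℝ) < 1 - 2 * σ))]
    with u hu hu₁ hexc hκu hBu d hd
  have hdu : ‖d‖ ≤ κ * ‖Fm g γ w u‖ := hdir u d hu₁ hd
  have hx : dist (u + (1 : ℝ) • d) ustar < ε :=
    (dist_add_smul_le zero_le_one).trans_lt (by linarith [Metric.mem_ball.1 hu])
  have hstep := norm_Fm_add_smul_le (hgrad.differentiable one_ne_zero) hL hγ.le hc' hsmooth hd
    zero_le_one le_rfl (hstab (Metric.mem_ball.1 hu |>.trans (half_lt_self hε))) (hstab hx)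
    (Or.inr hexc)
  rw [one_smul, sub_self, zero_mul, zero_add, one_pow, mul_one] at hstep
  refine Th_le_mul_of_norm_Fm_le (q := B * ‖Fm g γ w u‖) (hstep.trans ?_) hBu
  calc γ * L * ‖d‖ ^ 2 ≤ γ * L * (κ * ‖Fm g γ w u‖) ^ 2 := by gcongr
    _ = B * ‖Fm g γ w u‖ * ‖Fm g γ w u‖ := by ring

theorem Fm_eq_zero_of_tendsto {β : ℝ} {useq dseq : ℕ → Euc n} {tseq : ℕ → ℝ}
    (hg : Assump n g c₁ c₂) (hγ : 0 < γ) (hc : ∀ k, 0 ≤ γ * w k) (hβ : β ∈ Set.Ioo 0 1)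
    (hσ : σ ∈ Set.Ioo 0 (1 / 2)) (hiter : ModIter g γ w β σ useq dseq tseq)
    (hconv : Tendsto useq atTop (𝓝 ustar)) (hsmooth : Ipl g γ w ustar ∪ Imi g γ w ustar = ∅) :
    Fm g γ w ustar = 0 := by
  obtain ⟨hdir, harm, hupd⟩ := hiter
  by_contra hne
  have hTh : Continuous (Th g γ w) :=
    (continuous_Fm hg.contDiff_gradient.continuous hc).norm.pow 2
  have ht : Tendsto tseq atTop (𝓝 0) :=
    tendsto_zero_of_le_one_sub_mul (c := 2 * σ) (by linarith [hσ.1])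
      (pow_pos (norm_pos_iff.2 hne) 2)
      ((hTh.tendsto ustar).comp hconv) (fun j => sq_nonneg _) (fun j => ((harm j).pos hβ.1).le)
      (fun j => by rw [Function.comp_apply, hupd j]; exact (harm j).Th_add_smul_le)
  obtain ⟨δ, hδ, τ₀, hτ₀, hsmall⟩ := exists_forall_Th_add_smul_le hg hγ hc hσ.2.le hsmooth
  obtain ⟨j, hj, htj⟩ := ((hconv.eventually (Metric.ball_mem_nhds ustar hδ)).and
    (ht.eventually (gt_mem_nhds (mul_pos hβ.1 (lt_min hτ₀ one_pos))))).exists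
  have hβτ : β * min τ₀ 1 < 1 := by nlinarith [min_le_right τ₀ 1, hβ.2, hβ.1]
  refine (harm j).not_le_of_ne_one hβ.1.ne' (htj.trans hβτ).ne
    (hsmall _ _ _ hj (hdir j) (div_nonneg ((harm j).pos hβ.1).le hβ.1.le) ?_)
  rw [div_le_iff₀' hβ.1]
  nlinarith [min_le_left τ₀ 1, hβ.1]

end LocalAnalysis

theorem stmt12_general {n : ℕ} (c₁ c₂ : ℝ) (g : Euc n → ℝ) (hg : Assump n g c₁ c₂)
    (w : Fin n → ℝ) (hw : ∀ k, 0 < w k) (γ : ℝ) (hγ : 0 < γ)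
    (β σ : ℝ) (hβ : β ∈ Set.Ioo (0 : ℝ) 1) (hσ : σ ∈ Set.Ioo (0 : ℝ) (1 / 2))
    (useq dseq : ℕ → Euc n) (tseq : ℕ → ℝ)
    (hiter : ModIter g γ w β σ useq dseq tseq)
    (ustar : Euc n) (hconv : Tendsto useq atTop (𝓝 ustar))
    (hsmooth : Ipl g γ w ustar ∪ Imi g γ w ustar = ∅) :
    ∃ j₀ : ℕ, ∀ j ≥ j₀,
      Th g γ w (useq j + dseq j) ≤ (1 - 2 * σ) * Th g γ w (useq j) ∧ tseq j = 1 := by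
  have hc (k : Fin n) : 0 < γ * w k := mul_pos hγ (hw k)
  have hF : Fm g γ w ustar = 0 :=
    Fm_eq_zero_of_tendsto hg hγ (fun k => (hc k).le) hβ hσ hiter hconv hsmooth
  obtain ⟨j₀, hj₀⟩ := eventually_atTop.1
    (hconv.eventually (eventually_Th_add_le hg hγ hc hσ.2 hsmooth hF))
  refine ⟨j₀, fun j hj => ?_⟩
  have hfull := hj₀ j hj (dseq j) (hiter.1 j)
  exact ⟨hfull, (hiter.2.1 j).eq_one_of_le hfull⟩

/-- if `g ∈ C³`, the iterates converge to a point `u*` at which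
`F` is smooth, then eventually the full Newton step is accepted and `t_j = 1`. -/
theorem stmt12 {n : ℕ} (hn : 1 ≤ n) (c₁ c₂ : ℝ) (g : Euc n → ℝ) (hg : Assump n g c₁ c₂)
    (hg3 : ContDiff ℝ 3 g)
    (w : Fin n → ℝ) (hw : ∀ k, 0 < w k) (γ : ℝ) (hγ : 0 < γ)
    (β σ : ℝ) (hβ : β ∈ Set.Ioo (0 : ℝ) 1) (hσ : σ ∈ Set.Ioo (0 : ℝ) (1 / 2))
    (useq dseq : ℕ → Euc n) (tseq : ℕ → ℝ)
    (hiter : ModIter g γ w β σ useq dseq tseq)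
    (hpos : ∀ j, 0 < Th g γ w (useq j))
    (hcpt : IsCompact {x : Euc n | Th g γ w x ≤ Th g γ w (useq 0)})
    (ustar : Euc n) (hconv : Tendsto useq atTop (𝓝 ustar))
    (hsmooth : Ipl g γ w ustar ∪ Imi g γ w ustar = ∅) :
    ∃ j₀ : ℕ, ∀ j ≥ j₀,
      Th g γ w (useq j + dseq j) ≤ (1 - 2 * σ) * Th g γ w (useq j) ∧ tseq j = 1 :=
  stmt12_general c₁ c₂ g hg w hw γ hγ β σ hβ hσ useq dseq tseq hiter ustar hconv hsmooth
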